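/- arXiv:1704.08661 — 3 statements merged into one kernel-verified Lean document; each statement's English description precedes it below -/
import Mathlib

section
/- For any string T over a finite alphabet and any letter j, the number of new distinct subsequences of T·j·j equals the number of new distinct subsequences of T·j, i.e., ν(T·j·j) = ν(T·j). -/
/-!
A subsequence of `W·a` that is not a subsequence of `W` must use the final `a`, so it is `s·a` with
`s` a subsequence of `W`. For `W = T·j` and `a = j`, the condition that `s·j` is not a subsequence of
`T·j` says exactly that `s` is not a subsequence of `T`, because `s·j ⊑ T·j ↔ s ⊑ T`. Hence appending
`j` is a bijection from the new subsequences of `T·j` onto those of `T·j·j`.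
-/

/-- Number of distinct nonempty subsequences of a string. -/
def phi {A : Type*} [DecidableEq A] (T : List A) : ℕ :=
  (T.sublists.toFinset.erase []).card

/-- Number of new distinct subsequences contributed by the last letter. -/
def nu {A : Type*} [DecidableEq A] (T : List A) : ℕ :=
  phi T - phi T.dropLast

namespace List

theorem sublist_concat_iff {α : Type*} {l T : List α} {a : α} :
    l <+ T ++ [a] ↔ l <+ T ∨ ∃ r, l = r ++ [a] ∧ r <+ T := by
  constructor
  · intro h
    obtain ⟨l₁, l₂, rfl, h₁, h₂⟩ := sublist_append_iff.mp h
    rcases sublist_singleton.mp h₂ with rfl | rfl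
    · exact .inl (by simpa using h₁)
    · exact .inr ⟨l₁, rfl, h₁⟩
  · rintro (h | ⟨r, rfl, hr⟩)
    · exact h.trans (sublist_append_left _ _)
    · exact (append_sublist_append_right _).mpr hr

end List

open List

section NewSublists

variable {A : Type*} [DecidableEq A]

def newSublists (T : List A) (a : A) : Finset (List A) :=
  (T ++ [a]).sublists.toFinset \ T.sublists.toFinset

theorem mem_newSublists {x T : List A} {a : A} :
    x ∈ newSublists T a ↔ x <+ T ++ [a] ∧ ¬x <+ T := by
  simp only [newSublists, Finset.mem_sdiff, mem_toFinset, mem_sublists]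

theorem nu_concat (T : List A) (a : A) : nu (T ++ [a]) = (newSublists T a).card := by
  have hsub : T.sublists.toFinset.erase [] ⊆ (T ++ [a]).sublists.toFinset.erase [] :=
    Finset.erase_subset_erase _ fun x hx => mem_toFinset.mpr <| mem_sublists.mpr <|
      (mem_sublists.mp (mem_toFinset.mp hx)).trans (sublist_append_left T [a])
  rw [nu, dropLast_concat, phi, phi, ← Finset.card_sdiff_of_subset hsub, newSublists]
  -- `[]` lies in both finsets, so erasing it does not change their difference.
  congr 1
  ext x
  simp only [Finset.mem_sdiff, Finset.mem_erase, mem_toFinset, mem_sublists]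
  constructor
  · rintro ⟨⟨hx₀, hx⟩, hxT⟩
    exact ⟨hx, fun h => hxT ⟨hx₀, h⟩⟩
  · rintro ⟨hx, hxT⟩
    exact ⟨⟨fun hx₀ => hxT (hx₀ ▸ nil_sublist T), hx⟩, fun h => hxT h.2⟩

theorem newSublists_concat_self (T : List A) (a : A) :
    newSublists (T ++ [a]) a = (newSublists T a).image (· ++ [a]) := by
  ext x
  simp only [Finset.mem_image, mem_newSublists]
  constructor
  · rintro ⟨hx, hxT⟩
    rcases sublist_concat_iff.mp hx with h | ⟨r, rfl, hr⟩
    · exact absurd h hxT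
    · exact ⟨r, ⟨hr, fun h => hxT ((append_sublist_append_right _).mpr h)⟩, rfl⟩
  · rintro ⟨r, ⟨hr, hrT⟩, rfl⟩
    exact ⟨(append_sublist_append_right _).mpr hr,
      fun h => hrT ((append_sublist_append_right _).mp h)⟩

end NewSublists

theorem stmt_4_general {A : Type*} [DecidableEq A]
    (T : List A) (j : A) :
    nu (T ++ [j, j]) = nu (T ++ [j]) := by
  rw [show T ++ [j, j] = T ++ [j] ++ [j] by simp, nu_concat, nu_concat, newSublists_concat_self,
    Finset.card_image_of_injective _ (append_left_injective [j])]

theorem stmt_4 {A : Type*} [DecidableEq A] [Fintype A]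
    (T : List A) (j : A) :
    nu (T ++ [j, j]) = nu (T ++ [j]) :=
  stmt_4_general T j
end

section
/- Let α ∈ (0,1), q = √(α(1−α)), and let ψ(n) = E[φ(S_n)] be the expected number of distinct nonempty subsequences of a random binary string with i.i.d. Bernoulli(α) letters. Then ψ(n) / (1+q)^n converges as n → ∞ to (1 + 2q)/(2q). -/
/-!
Split the distinct nonempty subsequences of a string by their first letter. Prepending `a` to `T`
turns those starting with `a` into the `a :: s` for the `φ(T) + 1` subsequences `s` of `T` (the
empty one included) and leaves the others unchanged. Averaging over the first letter gives a
linear system for the two expected counts, which collapses to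
`ψ(n + 2) = 2ψ(n + 1) - (1 - q²)ψ(n) + 2q²` with `ψ(0) = 0`, `ψ(1) = 1`. Its characteristic roots
are `1 ± q`, so `2qψ(n) = (1 + 2q)(1 + q)ⁿ + (2q - 1)(1 - q)ⁿ - 4q`.
-/

open Filter Topology

section Subsequences

variable {A : Type*} [DecidableEq A]

def phiHead (a : A) (T : List A) : ℕ :=
  ((T.sublists.toFinset.erase []).filter (fun t => t.head? = some a)).card

theorem List.sublists_toFinset_cons (a : A) (T : List A) :
    (a :: T).sublists.toFinset = T.sublists.toFinset ∪ T.sublists.toFinset.image (a :: ·) := by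
  ext t
  simp only [List.mem_toFinset, List.mem_sublists, Finset.mem_union, Finset.mem_image,
    List.sublist_cons_iff]
  constructor
  · rintro (h | ⟨r, rfl, hr⟩)
    exacts [Or.inl h, Or.inr ⟨r, hr, rfl⟩]
  · rintro (h | ⟨r, hr, rfl⟩)
    exacts [Or.inl h, Or.inr ⟨r, rfl, hr⟩]

theorem phi_eq_sum_phiHead [Fintype A] (T : List A) : phi T = ∑ a, phiHead a T := by
  rw [phi, Finset.card_eq_sum_card_fiberwise (f := List.head?) (t := Finset.univ)
    (fun _ _ => Finset.mem_univ _), Fintype.sum_option]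
  have h_none : ((T.sublists.toFinset.erase []).filter (fun t => t.head? = none)).card = 0 := by
    simp +contextual [Finset.filter_eq_empty_iff]
  simp only [h_none, zero_add, phiHead]

theorem phiHead_cons_self (a : A) (T : List A) : phiHead a (a :: T) = phi T + 1 := by
  have h_image : ((a :: T).sublists.toFinset.erase []).filter (fun t => t.head? = some a)
      = T.sublists.toFinset.image (a :: ·) := by
    ext t
    simp only [Finset.mem_filter, Finset.mem_erase, List.sublists_toFinset_cons,
      Finset.mem_union, Finset.mem_image, List.mem_toFinset, List.mem_sublists]
    constructor
    · rintro ⟨⟨hne, h | ⟨r, hr, rfl⟩⟩, hhead⟩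
      · obtain ⟨b, t, rfl⟩ := List.exists_cons_of_ne_nil hne
        obtain rfl : b = a := by simpa using hhead
        exact ⟨t, (List.sublist_cons_self b t).trans h, rfl⟩
      · exact ⟨r, hr, rfl⟩
    · rintro ⟨r, hr, rfl⟩
      exact ⟨⟨List.cons_ne_nil _ _, Or.inr ⟨r, hr, rfl⟩⟩, rfl⟩
  have h_nil : [] ∈ T.sublists.toFinset := by simp
  rw [phiHead, h_image, Finset.card_image_of_injective _ List.cons_injective, phi,
    Finset.card_erase_of_mem h_nil, Nat.sub_add_cancel (Finset.card_pos.2 ⟨[], h_nil⟩)]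

theorem phiHead_cons_of_ne {a b : A} (h : b ≠ a) (T : List A) :
    phiHead b (a :: T) = phiHead b T := by
  unfold phiHead
  congr 1
  ext t
  simp only [Finset.mem_filter, Finset.mem_erase, List.sublists_toFinset_cons,
    Finset.mem_union, Finset.mem_image, List.mem_toFinset, List.mem_sublists]
  constructor
  · rintro ⟨⟨hne, ht | ⟨r, -, rfl⟩⟩, hhead⟩
    · exact ⟨⟨hne, ht⟩, hhead⟩
    · exact absurd (by simpa using hhead.symm) h
  · rintro ⟨⟨hne, ht⟩, hhead⟩
    exact ⟨⟨hne, Or.inl ht⟩, hhead⟩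

end Subsequences

section Bernoulli

def bernoulliWeight (α : ℝ) (l : List Bool) : ℝ :=
  α ^ l.count true * (1 - α) ^ l.count false

noncomputable def bernoulliExpect (α : ℝ) (n : ℕ) (F : List Bool → ℝ) : ℝ :=
  ∑ T : Fin n → Bool, F (List.ofFn T) * bernoulliWeight α (List.ofFn T)

variable (α : ℝ)

theorem bernoulliExpect_succ (n : ℕ) (F : List Bool → ℝ) :
    bernoulliExpect α (n + 1) F
      = α * bernoulliExpect α n (fun T => F (true :: T))
        + (1 - α) * bernoulliExpect α n (fun T => F (false :: T)) := by
  have h_ofFn (b : Bool) (T : Fin n → Bool) :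
      List.ofFn (Fin.consEquiv (fun _ => Bool) (b, T)) = b :: List.ofFn T := by
    simp [Fin.consEquiv, List.ofFn_succ]
  have h_weight (b : Bool) (l : List Bool) :
      bernoulliWeight α (b :: l) = (if b then α else 1 - α) * bernoulliWeight α l := by
    cases b <;> simp [bernoulliWeight, pow_succ] <;> ring
  rw [bernoulliExpect, ← (Fin.consEquiv fun _ => Bool).sum_comp, Fintype.sum_prod_type,
    Fintype.sum_bool]
  simp only [h_ofFn, h_weight, bernoulliExpect, Finset.mul_sum]
  congr 1 <;> refine Finset.sum_congr rfl fun T _ => ?_ <;>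
    simp only [if_true, Bool.false_eq_true, if_false] <;> ring

theorem bernoulliExpect_add (n : ℕ) (F G : List Bool → ℝ) :
    bernoulliExpect α n (fun T => F T + G T) = bernoulliExpect α n F + bernoulliExpect α n G := by
  simp only [bernoulliExpect, add_mul, Finset.sum_add_distrib]

theorem bernoulliExpect_one (n : ℕ) : bernoulliExpect α n (fun _ => 1) = 1 := by
  induction n with
  | zero => simp [bernoulliExpect, bernoulliWeight]
  | succ n ih => rw [bernoulliExpect_succ, ih]; ring

end Bernoulli

section ExpectedSubsequences

variable (α : ℝ)

theorem bernoulliExpect_phi_zero : bernoulliExpect α 0 (fun T => phi T) = 0 := by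
  simp [bernoulliExpect, phi]

theorem bernoulliExpect_phi_one : bernoulliExpect α 1 (fun T => phi T) = 1 := by
  rw [bernoulliExpect_succ]
  simp [bernoulliExpect, bernoulliWeight, phi]

theorem bernoulliExpect_phiHead_true_succ (n : ℕ) :
    bernoulliExpect α (n + 1) (fun T => phiHead true T)
      = α * (bernoulliExpect α n (fun T => phi T) + 1)
        + (1 - α) * bernoulliExpect α n (fun T => phiHead true T) := by
  simp only [bernoulliExpect_succ, phiHead_cons_self, phiHead_cons_of_ne Bool.false_ne_true.symm,
    Nat.cast_add, Nat.cast_one, bernoulliExpect_add, bernoulliExpect_one]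

theorem bernoulliExpect_phiHead_false_succ (n : ℕ) :
    bernoulliExpect α (n + 1) (fun T => phiHead false T)
      = α * bernoulliExpect α n (fun T => phiHead false T)
        + (1 - α) * (bernoulliExpect α n (fun T => phi T) + 1) := by
  simp only [bernoulliExpect_succ, phiHead_cons_self, phiHead_cons_of_ne Bool.false_ne_true,
    Nat.cast_add, Nat.cast_one, bernoulliExpect_add, bernoulliExpect_one]

theorem bernoulliExpect_phi (n : ℕ) :
    bernoulliExpect α n (fun T => phi T)
      = bernoulliExpect α n (fun T => phiHead true T)
        + bernoulliExpect α n (fun T => phiHead false T) := by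
  rw [← bernoulliExpect_add]
  simp only [phi_eq_sum_phiHead, Fintype.sum_bool, Nat.cast_add]

theorem bernoulliExpect_phi_succ_succ (n : ℕ) :
    bernoulliExpect α (n + 2) (fun T => phi T)
      = 2 * bernoulliExpect α (n + 1) (fun T => phi T)
        - (1 - α * (1 - α)) * bernoulliExpect α n (fun T => phi T) + 2 * (α * (1 - α)) := by
  have ht₁ := bernoulliExpect_phiHead_true_succ α n
  have ht₂ := bernoulliExpect_phiHead_true_succ α (n + 1)
  have hf₁ := bernoulliExpect_phiHead_false_succ α n
  have hf₂ := bernoulliExpect_phiHead_false_succ α (n + 1)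
  have hs₀ := bernoulliExpect_phi α n
  have hs₁ := bernoulliExpect_phi α (n + 1)
  have hs₂ := bernoulliExpect_phi α (n + 2)
  linear_combination hs₂ + ht₂ + hf₂ - hs₁ - α * ht₁ - (1 - α) * hf₁ + α * (1 - α) * hs₀

end ExpectedSubsequences

theorem two_mul_eq_of_recurrence {q : ℝ} {x : ℕ → ℝ} (h₀ : x 0 = 0) (h₁ : x 1 = 1)
    (h : ∀ n, x (n + 2) = 2 * x (n + 1) - (1 - q ^ 2) * x n + 2 * q ^ 2) (n : ℕ) :
    2 * q * x n = (1 + 2 * q) * (1 + q) ^ n + (2 * q - 1) * (1 - q) ^ n - 4 * q := by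
  induction n using Nat.twoStepInduction with
  | zero => rw [h₀]; ring
  | one => rw [h₁]; ring
  | more n ih₀ ih₁ => rw [h n]; linear_combination 2 * ih₁ - (1 - q ^ 2) * ih₀

theorem tendsto_closedForm_div_pow {q : ℝ} (hq : 0 < q) :
    Tendsto (fun n : ℕ => ((1 + 2 * q) * (1 + q) ^ n + (2 * q - 1) * (1 - q) ^ n - 4 * q)
      / (2 * q) / (1 + q) ^ n) atTop (𝓝 ((1 + 2 * q) / (2 * q))) := by
  have hr : |(1 - q) / (1 + q)| < 1 := by
    rw [abs_div, abs_of_pos (by linarith : 0 < 1 + q), div_lt_one (by linarith)]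
    exact abs_lt.2 ⟨by linarith, by linarith⟩
  have hs : |1 / (1 + q)| < 1 := by
    rw [abs_of_pos (by positivity), div_lt_one (by linarith)]
    linarith
  have h_lim := (((tendsto_pow_atTop_nhds_zero_of_abs_lt_one hr).const_mul
    ((2 * q - 1) / (2 * q))).const_add ((1 + 2 * q) / (2 * q))).sub
    ((tendsto_pow_atTop_nhds_zero_of_abs_lt_one hs).const_mul 2)
  simp only [mul_zero, add_zero, sub_zero] at h_lim
  refine h_lim.congr fun n => ?_
  have : (1 + q) ^ n ≠ 0 := pow_ne_zero _ (by linarith)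
  rw [div_pow, div_pow, one_pow]
  field_simp
  ring

theorem stmt_13 (α : ℝ) (hα : α ∈ Set.Ioo (0:ℝ) 1)
    (q : ℝ) (hq : q = Real.sqrt (α * (1 - α)))
    (ψ : ℕ → ℝ)
    (hψ : ∀ n, ψ n = ∑ T : Fin n → Bool,
        (phi (List.ofFn T) : ℝ) * α ^ ((List.ofFn T).count true)
          * (1 - α) ^ ((List.ofFn T).count false)) :
    Filter.Tendsto (fun n => ψ n / (1 + q) ^ n) Filter.atTop
      (nhds ((1 + 2 * q) / (2 * q))) := by
  have hα_var : 0 < α * (1 - α) := mul_pos hα.1 (sub_pos.2 hα.2)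
  have hq_pos : 0 < q := hq ▸ Real.sqrt_pos.2 hα_var
  have hq_sq : q ^ 2 = α * (1 - α) := hq ▸ Real.sq_sqrt hα_var.le
  obtain rfl : ψ = fun n => bernoulliExpect α n (fun T => phi T) := by
    funext n
    simp only [hψ, bernoulliExpect, bernoulliWeight, mul_assoc]
  have h_closed := two_mul_eq_of_recurrence (q := q)
    (x := fun n => bernoulliExpect α n (fun T => phi T))
    (bernoulliExpect_phi_zero α) (bernoulliExpect_phi_one α) (by rw [hq_sq]; exact bernoulliExpect_phi_succ_succ α)
  refine (tendsto_closedForm_div_pow hq_pos).congr fun n => ?_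
  rw [← h_closed n, mul_div_cancel_left₀ _ (by positivity)]
end

section
/- Let s_1, s_2, ... be i.i.d. letters from {1,...,d} with Pr[s_i = j] = α_j and ψ(n) = E[φ(S_n)] the expected number of distinct nonempty subsequences of S_n = (s_1,...,s_n). Then there exists a constant c with 1 ≤ c ≤ d such that ψ(n)^{1/n} → c as n → ∞. -/
open Filter Real Topology

section Subsequences

variable {A : Type*} [DecidableEq A]

lemma one_add_phi (L : List A) : 1 + phi L = L.sublists.toFinset.card := by
  have h : [] ∈ L.sublists.toFinset := by simp
  rw [phi, Finset.card_erase_of_mem h, add_comm, Nat.sub_add_cancel (Finset.card_pos.2 ⟨_, h⟩)]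

lemma one_le_phi {L : List A} (h : L ≠ []) : 1 ≤ phi L :=
  Finset.card_pos.2 ⟨L, Finset.mem_erase.2 ⟨h, by simp⟩⟩

lemma one_add_phi_append_le (u v : List A) :
    1 + phi (u ++ v) ≤ (1 + phi u) * (1 + phi v) := by
  simp only [one_add_phi, ← Finset.card_product]
  refine (Finset.card_le_card fun w hw => ?_).trans
    (Finset.card_image_le (f := fun p : List A × List A => p.1 ++ p.2))
  rw [List.mem_toFinset, List.mem_sublists, List.sublist_append_iff] at hw
  obtain ⟨u', v', rfl, hu, hv⟩ := hw
  exact Finset.mem_image.2 ⟨(u', v'), by simp [hu, hv], rfl⟩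

lemma one_add_phi_le [Fintype A] (L : List A) :
    1 + phi L ≤ (L.length + 1) * Fintype.card A ^ L.length := by
  rcases L with _ | ⟨a, L'⟩
  · simp [phi]
  set L := a :: L'
  rw [one_add_phi]
  -- a sublist is determined by its length and its letters, padded with `a`
  refine (Finset.card_le_card_of_injOn (t := Finset.range (L.length + 1) ×ˢ Finset.univ)
    (fun w => (w.length, fun i : Fin L.length => w.getD i a))
    (fun w hw => ?_) (fun w₁ hw₁ w₂ hw₂ heq => ?_)).trans_eq (by simp)
  · simp only [Finset.mem_coe, List.mem_toFinset, List.mem_sublists] at hw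
    simpa [Nat.lt_succ_iff] using hw.length_le
  · simp only [Finset.mem_coe, List.mem_toFinset, List.mem_sublists] at hw₁ hw₂
    simp only [Prod.mk.injEq, funext_iff] at heq
    refine List.ext_getElem heq.1 fun i hi₁ hi₂ => ?_
    simpa [hi₁, hi₂] using heq.2 ⟨i, hi₁.trans_le hw₁.length_le⟩

end Subsequences

section WordMean

variable {A : Type*} [Fintype A]

/-- The expectation of `f` on a random word of length `n` with i.i.d. letters of law `α`. -/
def wordMean (α : A → ℝ) (n : ℕ) (f : List A → ℝ) : ℝ :=
  ∑ T : Fin n → A, f (List.ofFn T) * ∏ i, α (T i)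

variable {α : A → ℝ}

lemma sum_prod_eq_one (hsum : ∑ a, α a = 1) (n : ℕ) : ∑ T : Fin n → A, ∏ i, α (T i) = 1 := by
  classical
  rw [← Fintype.prod_sum]
  simp [hsum]

lemma wordMean_const (hsum : ∑ a, α a = 1) (n : ℕ) (c : ℝ) : wordMean α n (fun _ => c) = c := by
  rw [wordMean, ← Finset.mul_sum, sum_prod_eq_one hsum, mul_one]

lemma wordMean_add (n : ℕ) (f g : List A → ℝ) :
    wordMean α n (fun w => f w + g w) = wordMean α n f + wordMean α n g := by
  simp only [wordMean, add_mul, Finset.sum_add_distrib]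

lemma wordMean_mono (hα : ∀ a, 0 ≤ α a) {n : ℕ} {f g : List A → ℝ}
    (h : ∀ T : Fin n → A, f (List.ofFn T) ≤ g (List.ofFn T)) :
    wordMean α n f ≤ wordMean α n g :=
  Finset.sum_le_sum fun T _ =>
    mul_le_mul_of_nonneg_right (h T) (Finset.prod_nonneg fun i _ => hα (T i))

lemma wordMean_add_le_mul (hα : ∀ a, 0 ≤ α a) {f : List A → ℝ}
    (hf : ∀ u v, f (u ++ v) ≤ f u * f v) (m n : ℕ) :
    wordMean α (m + n) f ≤ wordMean α m f * wordMean α n f := by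
  have hsplit : wordMean α (m + n) f = ∑ p : (Fin m → A) × (Fin n → A),
      f (List.ofFn p.1 ++ List.ofFn p.2) * ((∏ i, α (p.1 i)) * ∏ i, α (p.2 i)) := by
    rw [wordMean, ← (Fin.appendEquiv m n).sum_comp]
    refine Fintype.sum_congr _ _ fun p => ?_
    simp [Fin.appendEquiv, List.ofFn_fin_append, Fin.prod_univ_add]
  rw [hsplit, wordMean, wordMean, Finset.sum_mul_sum, Fintype.sum_prod_type]
  refine Finset.sum_le_sum fun T₁ _ => Finset.sum_le_sum fun T₂ _ => ?_
  have hT : 0 ≤ (∏ i, α (T₁ i)) * ∏ i, α (T₂ i) :=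
    mul_nonneg (Finset.prod_nonneg fun i _ => hα _) (Finset.prod_nonneg fun i _ => hα _)
  calc f (List.ofFn T₁ ++ List.ofFn T₂) * ((∏ i, α (T₁ i)) * ∏ i, α (T₂ i))
      ≤ f (List.ofFn T₁) * f (List.ofFn T₂) * ((∏ i, α (T₁ i)) * ∏ i, α (T₂ i)) :=
        mul_le_mul_of_nonneg_right (hf _ _) hT
    _ = _ := by ring

lemma one_le_wordMean_phi [DecidableEq A] (hα : ∀ a, 0 ≤ α a) (hsum : ∑ a, α a = 1) {n : ℕ}
    (hn : n ≠ 0) : 1 ≤ wordMean α n fun w => (phi w : ℝ) :=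
  (wordMean_const hsum n 1).symm.le.trans <| wordMean_mono hα fun _ => by
    exact_mod_cast one_le_phi (List.ofFn_eq_nil_iff.not.2 hn)

end WordMean

lemma exists_tendsto_log_div_of_submultiplicative {F : ℕ → ℝ} (h1 : ∀ n, 1 ≤ F n)
    (hsub : ∀ m n, F (m + n) ≤ F m * F n) :
    ∃ L, 0 ≤ L ∧ Tendsto (fun n : ℕ => log (F n) / n) atTop (𝓝 L) := by
  have hpos n : 0 < F n := zero_lt_one.trans_le (h1 n)
  have hlog : Subadditive fun n => log (F n) := fun m n => by
    rw [← log_mul (hpos m).ne' (hpos n).ne']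
    exact log_le_log (hpos _) (hsub m n)
  have hnonneg n : 0 ≤ log (F n) / n := div_nonneg (log_nonneg (h1 n)) n.cast_nonneg
  have hL := hlog.tendsto_lim ⟨0, Set.forall_mem_range.2 hnonneg⟩
  exact ⟨_, ge_of_tendsto' hL hnonneg, hL⟩

lemma tendsto_log_natCast_add_one_div : Tendsto (fun n : ℕ => log ((n : ℝ) + 1) / n) atTop (𝓝 0) :=
  ((tendsto_pow_log_div_mul_add_atTop 1 (-1) 1 one_ne_zero).comp
    (tendsto_atTop_add_const_right _ 1 tendsto_natCast_atTop_atTop)).congr fun n => by simp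

lemma le_log_of_tendsto_log_div {F : ℕ → ℝ} {D L : ℝ} (hF : ∀ n, 0 < F n) (hD : 0 < D)
    (hle : ∀ n : ℕ, F n ≤ (n + 1) * D ^ n)
    (hL : Tendsto (fun n : ℕ => log (F n) / n) atTop (𝓝 L)) : L ≤ log D := by
  have hbound : ∀ᶠ n : ℕ in atTop, log (F n) / n ≤ log ((n : ℝ) + 1) / n + log D := by
    filter_upwards [eventually_ne_atTop 0] with n hn
    have hn' : (0 : ℝ) < n := by positivity
    rw [div_add' _ _ _ hn'.ne', div_le_div_iff_of_pos_right hn', mul_comm, ← log_pow,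
      ← log_mul (by positivity) (by positivity)]
    exact log_le_log (hF n) (hle n)
  simpa using le_of_tendsto_of_tendsto hL
    (tendsto_log_natCast_add_one_div.add_const (log D)) hbound

lemma tendsto_log_div_of_le_of_le_mul {u v : ℕ → ℝ} {C L : ℝ} (hC : 0 < C)
    (hu : ∀ᶠ n in atTop, 0 < u n) (huv : ∀ᶠ n in atTop, u n ≤ v n)
    (hvu : ∀ᶠ n in atTop, v n ≤ C * u n)
    (hv : Tendsto (fun n : ℕ => log (v n) / n) atTop (𝓝 L)) :
    Tendsto (fun n : ℕ => log (u n) / n) atTop (𝓝 L) := by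
  have hlower : Tendsto (fun n : ℕ => log (v n) / n - log C / n) atTop (𝓝 L) := by
    simpa using hv.sub (tendsto_const_nhds.div_atTop tendsto_natCast_atTop_atTop)
  refine tendsto_of_tendsto_of_tendsto_of_le_of_le' hlower hv ?_ ?_
  · filter_upwards [hu, huv, hvu] with n hun huvn hvun
    have hlog : log (v n) ≤ log C + log (u n) := by
      rw [← log_mul hC.ne' hun.ne']
      exact log_le_log (hun.trans_le huvn) hvun
    rw [← sub_div]
    exact div_le_div_of_nonneg_right (by linarith) n.cast_nonneg
  · filter_upwards [hu, huv] with n hun hvn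
    exact div_le_div_of_nonneg_right (log_le_log hun hvn) n.cast_nonneg

lemma tendsto_rpow_one_div_of_tendsto_log_div {u : ℕ → ℝ} {L : ℝ} (hu : ∀ᶠ n in atTop, 0 < u n)
    (h : Tendsto (fun n : ℕ => log (u n) / n) atTop (𝓝 L)) :
    Tendsto (fun n : ℕ => u n ^ ((1 : ℝ) / n)) atTop (𝓝 (exp L)) := by
  refine ((continuous_exp.tendsto L).comp h).congr' ?_
  filter_upwards [hu] with n hn
  rw [rpow_def_of_pos hn, mul_one_div, Function.comp_apply]

theorem stmt_16 (d : ℕ) (hd : 0 < d) (α : Fin d → ℝ)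
    (hα : ∀ j, 0 ≤ α j) (hsum : ∑ j, α j = 1)
    (ψ : ℕ → ℝ)
    (hψ : ∀ n, ψ n = ∑ T : Fin n → Fin d,
        (phi (List.ofFn T) : ℝ) * ∏ i, α (T i)) :
    ∃ c : ℝ, 1 ≤ c ∧ c ≤ d ∧
      Filter.Tendsto (fun n : ℕ => ψ n ^ ((1 : ℝ) / n)) Filter.atTop (nhds c) := by
  obtain rfl : ψ = fun n => wordMean α n fun w => (phi w : ℝ) := funext hψ
  set F : ℕ → ℝ := fun n => wordMean α n fun w => 1 + (phi w : ℝ)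
  have hF n : F n = 1 + wordMean α n fun w => (phi w : ℝ) := by
    rw [← wordMean_const hsum n 1, ← wordMean_add]
  have hF1 n : 1 ≤ F n :=
    (wordMean_const hsum n 1).symm.le.trans (wordMean_mono hα fun T => by simp)
  have hsub : ∀ m n, F (m + n) ≤ F m * F n :=
    wordMean_add_le_mul hα fun u v => by exact_mod_cast one_add_phi_append_le u v
  have hbound n : F n ≤ (n + 1) * (d : ℝ) ^ n := by
    refine (wordMean_mono hα fun T => ?_).trans_eq (wordMean_const hsum n _)
    simpa using (Nat.cast_le (α := ℝ)).2 (one_add_phi_le (List.ofFn T))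
  obtain ⟨L, hL0, hL⟩ := exists_tendsto_log_div_of_submultiplicative hF1 hsub
  have hLd := le_log_of_tendsto_log_div (fun n => one_pos.trans_le (hF1 n))
    (Nat.cast_pos.2 hd) hbound hL
  have hψpos : ∀ᶠ n in atTop, 0 < wordMean α n fun w => (phi w : ℝ) :=
    eventually_atTop.2 ⟨1, fun n hn => one_pos.trans_le (one_le_wordMean_phi hα hsum (by omega))⟩
  refine ⟨exp L, one_le_exp hL0, (exp_le_exp.2 hLd).trans_eq (exp_log (Nat.cast_pos.2 hd)),
    tendsto_rpow_one_div_of_tendsto_log_div hψpos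
      (tendsto_log_div_of_le_of_le_mul two_pos hψpos ?_ ?_ hL)⟩
  · exact Eventually.of_forall fun n => by linarith [hF n]
  · filter_upwards [eventually_ge_atTop 1] with n hn
    linarith [hF n, one_le_wordMean_phi hα hsum (n := n) (by omega)]
end
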